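/- Let M be a positive integer and suppose C(M, j) and C(M, j') are two consecutive odd entries in row M, i.e., C(M, j) and C(M, j') are odd with j < j' and C(M, i) is even for all j < i < j'. Then j' - j - 1, the number of even entries strictly between them, is of the form 2^{l_g} - 2^{l_{g-1}} - ... - 2^{l_1} - 1 for some g in {1, ..., m}, where M = 2^{l_m} + ... + 2^{l_1} is the binary expansion of M with l_m > ... > l_1. -/

import Mathlib

/-!
By Lucas's theorem, `C(M, k)` is odd exactly when the binary digits of `k` form a subset of
those of `M`. If `j` is such a submask and `e` is the lowest digit of `M` missing from `j`,
then `j` agrees with `M` below `e`, and the next submask of `M` is obtained by rounding `j` up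
to the next multiple of `2^e`, which sets digit `e` and clears the digits below it. The gap is
therefore `2^e - (M mod 2^e) - 1`, and `M mod 2^e` is the sum of the powers `2^l` with
`l < e` in the binary expansion of `M`.
-/

open Finset

namespace Nat

def Submask (k n : ℕ) : Prop := ∀ i, k.testBit i = true → n.testBit i = true

theorem Submask.le {k n : ℕ} (h : Submask k n) : k ≤ n := le_of_testBit h

theorem Submask.mod_two_pow {k n : ℕ} (h : Submask k n) (e : ℕ) :
    Submask (k % 2 ^ e) (n % 2 ^ e) := by
  intro i hi
  simp only [testBit_mod_two_pow, Bool.and_eq_true] at hi ⊢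
  exact ⟨hi.1, h i hi.2⟩

theorem odd_choose_iff_submask (n k : ℕ) : Odd (n.choose k) ↔ Submask k n := by
  induction k using Nat.strong_induction_on generalizing n with
  | _ k ih =>
  rcases Nat.eq_zero_or_pos k with rfl | hk
  · simp [Submask]
  have hlow : Odd ((n % 2).choose (k % 2)) ↔ (k.testBit 0 = true → n.testBit 0 = true) := by
    rcases Nat.mod_two_eq_zero_or_one n with hn | hn <;>
      rcases Nat.mod_two_eq_zero_or_one k with hk' | hk' <;> simp [hn, hk']
  rw [Nat.odd_iff, Choose.choose_modEq_choose_mod_mul_choose_div_nat, ← Nat.odd_iff,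
    Nat.odd_mul, hlow, ih (k / 2) (Nat.div_lt_self hk one_lt_two)]
  simp only [Submask, testBit_div_two]
  constructor
  · rintro ⟨h0, hs⟩ (_ | i)
    exacts [h0, hs i]
  · exact fun h => ⟨h 0, fun i => h (i + 1)⟩

theorem sum_filter_testBit_two_pow (n e : ℕ) :
    ∑ i ∈ (range e).filter (fun i => n.testBit i), 2 ^ i = n % 2 ^ e := by
  induction e with
  | zero => simp [Nat.mod_one]
  | succ e ih =>
    rw [Finset.sum_filter] at ih ⊢
    rw [sum_range_succ, ih, Nat.mod_pow_succ, testBit_eq_decide_div_mod_eq]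
    rcases Nat.mod_two_eq_zero_or_one (n / 2 ^ e) with h | h <;> simp [h]

theorem mul_div_add_one_le_of_lt_of_mod_le {m j k : ℕ} (hjk : j < k) (hmod : k % m ≤ j % m) :
    m * (j / m + 1) ≤ k := by
  by_contra! hlt
  have hdiv : k / m ≤ j / m := Nat.lt_add_one_iff.mp (Nat.div_lt_of_lt_mul hlt)
  have := Nat.mul_le_mul_left m hdiv
  have := Nat.div_add_mod k m
  have := Nat.div_add_mod j m
  omega

theorem Submask.exists_lowest_missing_bit {j n : ℕ} (hj : Submask j n) (hjn : j ≠ n) :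
    ∃ e, n.testBit e = true ∧ j.testBit e = false ∧ j % 2 ^ e = n % 2 ^ e := by
  have hex : ∃ e, n.testBit e = true ∧ j.testBit e = false := by
    by_contra! h
    exact hjn (eq_of_testBit_eq fun i => by
      cases hji : j.testBit i
      · cases hni : n.testBit i
        · rfl
        · simp [h i hni] at hji
      · exact (hj i hji).symm)
  obtain ⟨hne, hje⟩ := Nat.find_spec hex
  refine ⟨Nat.find hex, hne, hje, eq_of_testBit_eq fun i => ?_⟩
  simp only [testBit_mod_two_pow]
  by_cases hi : i < Nat.find hex
  · have hmin : ¬(n.testBit i = true ∧ j.testBit i = false) := Nat.find_min hex hi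
    simp only [hi, decide_true, Bool.true_and]
    rcases Bool.eq_false_or_eq_true (j.testBit i) with hji | hji
    · rw [hji, hj i hji]
    · rw [hji, eq_comm, Bool.eq_false_iff]
      exact fun hni => hmin ⟨hni, hji⟩
  · simp [hi]

theorem Submask.two_pow_mul_div_add_one {j n e : ℕ} (hj : Submask j n) (hne : n.testBit e = true)
    (hje : j.testBit e = false) : Submask (2 ^ e * (j / 2 ^ e + 1)) n := by
  have hsplit : 2 ^ e * (j / 2 ^ e + 1) = 2 ^ (e + 1) * (j / 2 ^ (e + 1)) + 2 ^ e := by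
    have heven : j / 2 ^ e % 2 = 0 := by
      simpa [testBit_eq_decide_div_mod_eq] using hje
    have := Nat.div_add_mod (j / 2 ^ e) 2
    rw [Nat.pow_succ, ← Nat.div_div_eq_div_mul]
    grind
  intro i hi
  rw [hsplit, testBit_two_pow_mul_add _ (Nat.pow_lt_pow_succ one_lt_two)] at hi
  split_ifs at hi with hie
  · rw [testBit_two_pow] at hi
    obtain rfl : e = i := by simpa using hi
    exact hne
  · rw [testBit_div_two_pow] at hi
    simpa [show i - (e + 1) + (e + 1) = i by omega] using hj _ hi

end Nat

theorem gap_between_consecutive_odds_general (M j j' : ℕ)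
    (hjj' : j < j')
    (hj : Odd (Nat.choose M j)) (hj' : Odd (Nat.choose M j'))
    (hbetween : ∀ i, j < i → i < j' → Even (Nat.choose M i)) :
    ∃ e : ℕ, Nat.testBit M e = true ∧
      j' - j - 1 =
        2 ^ e - (∑ i ∈ (Finset.range e).filter (fun i => Nat.testBit M i), 2 ^ i) - 1 := by
  rw [Nat.odd_choose_iff_submask] at hj hj'
  obtain ⟨e, hMe, hje, hmod⟩ :=
    hj.exists_lowest_missing_bit (hjj'.trans_le hj'.le).ne
  set c := 2 ^ e * (j / 2 ^ e + 1)
  have hjc : j < c := Nat.lt_mul_div_succ j (Nat.two_pow_pos e)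
  have hcj' : c ≤ j' :=
    Nat.mul_div_add_one_le_of_lt_of_mod_le hjj' (hmod ▸ (hj'.mod_two_pow e).le)
  have hc_odd : Odd (M.choose c) := (Nat.odd_choose_iff_submask M c).mpr
    (hj.two_pow_mul_div_add_one hMe hje)
  obtain rfl : c = j' := hcj'.eq_or_lt.resolve_right fun hlt =>
    Nat.not_even_iff_odd.mpr hc_odd (hbetween c hjc hlt)
  refine ⟨e, hMe, ?_⟩
  rw [Nat.sum_filter_testBit_two_pow, ← hmod]
  have := Nat.div_add_mod j (2 ^ e)
  grind

/-- If `C(M,j)` and `C(M,j')` are two consecutive odd entries in row `M` of Pascal's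
triangle (only even entries strictly between them), then the number `j' - j - 1` of even
entries strictly between them equals `2^{l_g} - 2^{l_{g-1}} - ⋯ - 2^{l_1} - 1` for some
exponent `l_g` appearing in the binary expansion of `M`, where `l_{g-1}, …, l_1` are
exactly the smaller exponents appearing in the binary expansion of `M`. -/
theorem gap_between_consecutive_odds (M j j' : ℕ) (hM : 0 < M)
    (hjj' : j < j') (hj'M : j' ≤ M)
    (hj : Odd (Nat.choose M j)) (hj' : Odd (Nat.choose M j'))
    (hbetween : ∀ i, j < i → i < j' → Even (Nat.choose M i)) :
    ∃ e : ℕ, Nat.testBit M e = true ∧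
      j' - j - 1 =
        2 ^ e - (∑ i ∈ (Finset.range e).filter (fun i => Nat.testBit M i), 2 ^ i) - 1 :=
  gap_between_consecutive_odds_general M j j' hjj' hj hj' hbetween
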